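/- Let V be a Tate vector space. Then the natural map V → V** (double continuous topological dual) is an isomorphism of topological vector spaces. -/

import Mathlib

/- STATEMENT 17: Let V be a Tate vector space.  Then the natural evaluation map
V → V** into the double (continuous, topological) dual is an isomorphism of
topological vector spaces.  The continuous dual of V is modelled as the space
of linear functionals vanishing on some basic open subspace; a functional on V*
is continuous iff it vanishes on the annihilator of some c-lattice of V
(annihilators of bounded sets being the basic open subspaces of V*).  The
topological part of the statement is expressed by the fact that the evaluation
map carries each c-lattice of V exactly onto the double annihilator, i.e. onto
the corresponding c-lattice of V**. -/

section

variable {k V : Type*} [Field k] [AddCommGroup V] [Module k V]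
  [UniformSpace V] [IsUniformAddGroup V] [CompleteSpace V] [T2Space V]

/-- `P` is a c-lattice: an open bounded subspace. -/
def IsCLattice (k : Type*) [Field k] [Module k V] (P : Submodule k V) : Prop :=
  IsOpen (P : Set V) ∧
    ∀ U : Submodule k V, IsOpen (U : Set V) →
      FiniteDimensional k (↥P ⧸ Submodule.comap P.subtype (P ⊓ U))

variable (ℬ : Set (Submodule k V))
  (hopen : ∀ W ∈ ℬ, IsOpen (W : Set V))
  (hbasis : (nhds (0 : V)).HasBasis (· ∈ ℬ) (fun W => (W : Set V)))

/-- The continuous dual `V*` of the Tate space `V`: linear functionals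
vanishing on some basic open subspace. -/
def Vdual : Submodule k (Module.Dual k V) where
  carrier := {f | ∃ W ∈ ℬ, ∀ v ∈ W, f v = 0}
  zero_mem' := by
    rcases hbasis.ex_mem with ⟨W, hW⟩
    exact ⟨W, hW, fun v _ => rfl⟩
  add_mem' := by
    rintro f g ⟨W₁, hW₁, h₁⟩ ⟨W₂, hW₂, h₂⟩
    have hmem : (W₁ : Set V) ∩ (W₂ : Set V) ∈ nhds (0 : V) :=
      Filter.inter_mem
        ((hopen W₁ hW₁).mem_nhds W₁.zero_mem)
        ((hopen W₂ hW₂).mem_nhds W₂.zero_mem)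
    rcases (hbasis.mem_iff.mp hmem) with ⟨W, hW, hsub⟩
    refine ⟨W, hW, fun v hv => ?_⟩
    have hv' := hsub hv
    simp only [LinearMap.add_apply, h₁ v hv'.1, h₂ v hv'.2, add_zero]
  smul_mem' := by
    rintro t f ⟨W, hW, hf⟩
    exact ⟨W, hW, fun v hv => by simp [hf v hv]⟩

/-- The evaluation map `V → V**`. -/
def ev (v : V) : (↥(Vdual ℬ hopen hbasis) →ₗ[k] k) where
  toFun := fun f => (f : Module.Dual k V) v
  map_add' := fun f g => rfl
  map_smul' := fun t f => rfl

/-- Continuous functionals on `V*`: those vanishing on the annihilator of some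
c-lattice of `V` (the annihilators of bounded subspaces being the basic open
subspaces of `V*`). -/
def Vddual : Set (↥(Vdual ℬ hopen hbasis) →ₗ[k] k) :=
  {F | ∃ P : Submodule k V, IsCLattice k P ∧
    ∀ f : ↥(Vdual ℬ hopen hbasis),
      (∀ v ∈ P, (f : Module.Dual k V) v = 0) → F f = 0}

/-! A functional `F` on `V*` that kills the annihilator of a c-lattice `P` is evaluation at a
point of `P`. Modulo a basic open subspace `W`, the image of `P` in `V ⧸ W` is finite-dimensional,
so finite-dimensional duality gives `v_W` with `f v_W = F f` for every `f` vanishing on `W`.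
Open subspaces are separated by continuous functionals, so `v_W` is unique modulo `W`; hence the
`v_W` form a Cauchy family, and its limit `v` in the complete space `V` satisfies `ev v = F`.
Conversely every vector lies in a c-lattice `W + k v`, by commensurability of the basic `W`. -/

open Filter Topology

namespace Submodule

variable {K E : Type*} [Field K] [AddCommGroup E] [Module K E]

theorem finiteDimensional_map_mkQ_iff (P W : Submodule K E) :
    FiniteDimensional K (P.map W.mkQ) ↔ FiniteDimensional K (P ⧸ comap P.subtype (P ⊓ W)) := by
  have hker : LinearMap.ker (W.mkQ ∘ₗ P.subtype) = comap P.subtype (P ⊓ W) := by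
    ext p
    simp
  have hrange : LinearMap.range (W.mkQ ∘ₗ P.subtype) = P.map W.mkQ := by
    rw [LinearMap.range_comp, range_subtype]
  exact (Module.Finite.equiv_iff ((quotEquivOfEq _ _ hker.symm).trans
    ((W.mkQ ∘ₗ P.subtype).quotKerEquivRange.trans (LinearEquiv.ofEq _ _ hrange)))).symm

theorem finiteDimensional_map_mkQ_of_le {P W U : Submodule K E} (hWU : W ≤ U)
    [FiniteDimensional K (P.map W.mkQ)] : FiniteDimensional K (P.map U.mkQ) := by
  rw [← LinearMap.comp_id U.mkQ, ← W.mapQ_mkQ U LinearMap.id (h := hWU), map_comp]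
  infer_instance

theorem exists_mem_forall_eq_apply_of_dualAnnihilator_le_ker (Q : Submodule K E)
    [FiniteDimensional K Q] (G : Module.Dual K (Module.Dual K E))
    (hG : Q.dualAnnihilator ≤ LinearMap.ker G) : ∃ x ∈ Q, ∀ φ, G φ = φ x := by
  obtain ⟨x, hx⟩ := (Module.evalEquiv K Q).surjective (G ∘ₗ Subspace.dualLift Q)
  refine ⟨x, x.2, fun φ => ?_⟩
  have hlift : φ - Subspace.dualLift Q (Q.dualRestrict φ) ∈ Q.dualAnnihilator :=
    (mem_dualAnnihilator _).mpr fun w hw => by simp [Subspace.dualLift_of_mem hw]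
  calc G φ = G (Subspace.dualLift Q (Q.dualRestrict φ)) := by
        rw [← sub_eq_zero, ← map_sub]; exact hG hlift
    _ = φ x := (LinearMap.congr_fun hx (Q.dualRestrict φ)).symm

end Submodule

theorem isLocallyConstant_of_eventually_eq_zero {G H F : Type*} [AddGroup G] [TopologicalSpace G]
    [IsTopologicalAddGroup G] [AddZeroClass H] [FunLike F G H] [AddMonoidHomClass F G H] (f : F)
    (hf : ∀ᶠ x in 𝓝 0, f x = 0) : IsLocallyConstant f := by
  refine (IsLocallyConstant.iff_eventually_eq f).mpr fun x => ?_
  rw [← map_add_left_nhds_zero x, eventually_map]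
  filter_upwards [hf] with y hy
  simp [hy]

theorem exists_forall_mem_of_hasBasis_nhds_zero {G ι : Type*} [AddGroup G] [UniformSpace G]
    [IsUniformAddGroup G] [CompleteSpace G] {p : ι → Prop} {s : ι → Set G}
    (hbasis : (𝓝 0).HasBasis p s) {S : ι → Set G} (hne : ∀ i, p i → (S i).Nonempty)
    (hclosed : ∀ i, p i → IsClosed (S i)) (hanti : ∀ i j, p i → p j → s j ⊆ s i → S j ⊆ S i)
    (hsub : ∀ i, p i → ∀ x ∈ S i, ∀ y ∈ S i, y - x ∈ s i) : ∃ x, ∀ i, p i → x ∈ S i := by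
  let L := ⨅ i : {i // p i}, 𝓟 (S i)
  have hL : ∀ i, p i → S i ∈ L := fun i hi => mem_iInf_of_mem ⟨i, hi⟩ (mem_principal_self _)
  obtain ⟨i₀, hi₀⟩ := hbasis.ex_mem
  have : Nonempty {i // p i} := ⟨⟨i₀, hi₀⟩⟩
  have : L.NeBot := by
    refine iInf_neBot_of_directed' (fun i j => ?_) fun i => principal_neBot_iff.mpr (hne i i.2)
    obtain ⟨k, hk, hkij⟩ :=
      hbasis.mem_iff.mp (inter_mem (hbasis.mem_of_mem i.2) (hbasis.mem_of_mem j.2))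
    exact ⟨⟨k, hk⟩, principal_mono.mpr (hanti i k i.2 hk fun x hx => (hkij hx).1),
      principal_mono.mpr (hanti j k j.2 hk fun x hx => (hkij hx).2)⟩
  have hcauchy : Cauchy L := by
    have hunif := hbasis.comap fun xy : G × G => xy.2 - xy.1
    rw [← uniformity_eq_comap_nhds_zero] at hunif
    rw [hunif.cauchy_iff]
    exact ⟨‹_›, fun i hi => ⟨S i, hL i hi, hsub i hi⟩⟩
  obtain ⟨x, hx⟩ := CompleteSpace.complete hcauchy
  exact ⟨x, fun i hi =>
    (hclosed i hi).mem_of_tendsto (b := L) hx (eventually_mem_set.mpr (hL i hi))⟩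

omit [IsUniformAddGroup V] [CompleteSpace V] [T2Space V] in
theorem mem_Vdual_of_isOpen {U : Submodule k V} (hU : IsOpen (U : Set V))
    {f : Module.Dual k V} (hf : ∀ u ∈ U, f u = 0) : f ∈ Vdual ℬ hopen hbasis := by
  obtain ⟨W, hW, hWU⟩ := hbasis.mem_iff.mp (hU.mem_nhds U.zero_mem)
  exact ⟨W, hW, fun w hw => hf w (hWU hw)⟩

omit [IsUniformAddGroup V] [CompleteSpace V] [T2Space V] in
theorem mem_of_forall_Vdual_apply_eq_zero {U : Submodule k V} (hU : IsOpen (U : Set V)) {v : V}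
    (h : ∀ f : Vdual ℬ hopen hbasis,
      (∀ u ∈ U, (f : Module.Dual k V) u = 0) → (f : Module.Dual k V) v = 0) : v ∈ U := by
  by_contra hv
  obtain ⟨f, hfv, hfU⟩ := U.exists_dual_map_eq_bot_of_notMem hv inferInstance
  have hf : ∀ u ∈ U, f u = 0 := fun u hu =>
    (Submodule.eq_bot_iff _).mp hfU _ (U.mem_map_of_mem hu)
  exact hfv (h ⟨f, mem_Vdual_of_isOpen ℬ hopen hbasis hU hf⟩ hf)

omit [CompleteSpace V] [T2Space V] in
theorem isLocallyConstant_Vdual (f : Vdual ℬ hopen hbasis) :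
    IsLocallyConstant ⇑(f : Module.Dual k V) := by
  obtain ⟨W, hW, hf⟩ := f.2
  exact isLocallyConstant_of_eventually_eq_zero _
    (eventually_of_mem ((hopen W hW).mem_nhds W.zero_mem) hf)

omit [IsUniformAddGroup V] [CompleteSpace V] [T2Space V] in
theorem exists_forall_apply_eq_of_finiteDimensional_map_mkQ {P W : Submodule k V}
    (hW : IsOpen (W : Set V)) [FiniteDimensional k (P.map W.mkQ)]
    (F : Vdual ℬ hopen hbasis →ₗ[k] k)
    (hF : ∀ f : Vdual ℬ hopen hbasis, (∀ v ∈ P, (f : Module.Dual k V) v = 0) → F f = 0) :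
    ∃ v : V, ∀ f : Vdual ℬ hopen hbasis,
      (∀ w ∈ W, (f : Module.Dual k V) w = 0) → (f : Module.Dual k V) v = F f := by
  let J : Module.Dual k (V ⧸ W) →ₗ[k] Vdual ℬ hopen hbasis :=
    W.mkQ.dualMap.codRestrict _ fun φ => mem_Vdual_of_isOpen ℬ hopen hbasis hW fun w hw => by
      simp [(Submodule.Quotient.mk_eq_zero W).mpr hw]
  obtain ⟨x, -, hx⟩ := (P.map W.mkQ).exists_mem_forall_eq_apply_of_dualAnnihilator_le_ker
    (F ∘ₗ J) fun φ hφ => hF (J φ) fun v hv =>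
      (Submodule.mem_dualAnnihilator φ).mp hφ _ (Submodule.mem_map_of_mem hv)
  obtain ⟨v, rfl⟩ := W.mkQ_surjective x
  refine ⟨v, fun f hf => ?_⟩
  have hWf : W ≤ LinearMap.ker (f : Module.Dual k V) := hf
  set φ : Module.Dual k (V ⧸ W) := W.liftQ f hWf
  have hJ : J φ = f := Subtype.ext (W.liftQ_mkQ _ hWf)
  calc (f : Module.Dual k V) v = φ (W.mkQ v) := rfl
    _ = F f := by rw [← hx, LinearMap.comp_apply, hJ]

omit [T2Space V] in
theorem exists_mem_ev_eq_of_isCLattice {P : Submodule k V} (hP : IsCLattice k P)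
    (F : Vdual ℬ hopen hbasis →ₗ[k] k)
    (hF : ∀ f : Vdual ℬ hopen hbasis, (∀ v ∈ P, (f : Module.Dual k V) v = 0) → F f = 0) :
    ∃ v ∈ P, ev ℬ hopen hbasis v = F := by
  let S : Submodule k V → Set V := fun W =>
    {v | ∀ f : Vdual ℬ hopen hbasis,
      (∀ w ∈ W, (f : Module.Dual k V) w = 0) → (f : Module.Dual k V) v = F f}
  obtain ⟨v, hv⟩ : ∃ v, ∀ W ∈ ℬ, v ∈ S W := by
    refine exists_forall_mem_of_hasBasis_nhds_zero hbasis (S := S) (fun W hW => ?_)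
      (fun W _ => ?_) (fun W W' _ _ hW'W v hv f hf => hv f fun w hw => hf w (hW'W hw))
      (fun W hW v hv v' hv' => ?_)
    · have := (Submodule.finiteDimensional_map_mkQ_iff P W).mpr (hP.2 W (hopen W hW))
      exact exists_forall_apply_eq_of_finiteDimensional_map_mkQ ℬ hopen hbasis (hopen W hW) F hF
    · simp only [S, Set.ofPred_forall]
      exact isClosed_iInter fun f => isClosed_iInter fun _ =>
        (isLocallyConstant_Vdual ℬ hopen hbasis f).isClosed_fiber _
    · refine mem_of_forall_Vdual_apply_eq_zero ℬ hopen hbasis (hopen W hW) fun f hf => ?_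
      rw [map_sub, hv f hf, hv' f hf, sub_self]
  have hev : ∀ f : Vdual ℬ hopen hbasis, (f : Module.Dual k V) v = F f := fun f =>
    let ⟨W, hW, hf⟩ := f.2
    hv W hW f hf
  exact ⟨v, mem_of_forall_Vdual_apply_eq_zero ℬ hopen hbasis hP.1 fun f hf => hev f ▸ hF f hf,
    LinearMap.ext hev⟩

omit [CompleteSpace V] [T2Space V] in
include hopen hbasis in
theorem exists_isCLattice_mem
    (hcomm : ∀ W₁ ∈ ℬ, ∀ W₂ ∈ ℬ,
      FiniteDimensional k (↥W₁ ⧸ Submodule.comap W₁.subtype (W₁ ⊓ W₂)))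
    (v : V) : ∃ P : Submodule k V, IsCLattice k P ∧ v ∈ P := by
  obtain ⟨W₀, hW₀⟩ := hbasis.ex_mem
  refine ⟨W₀ ⊔ Submodule.span k {v}, ⟨Submodule.isOpen_mono le_sup_left (hopen W₀ hW₀),
    fun U hU => ?_⟩, Submodule.mem_sup_right (Submodule.mem_span_singleton_self v)⟩
  obtain ⟨W, hW, hWU⟩ := hbasis.mem_iff.mp (hU.mem_nhds U.zero_mem)
  have := (Submodule.finiteDimensional_map_mkQ_iff W₀ W).mpr (hcomm W₀ hW₀ W hW)
  have := Submodule.finiteDimensional_map_mkQ_of_le (P := W₀) hWU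
  rw [← Submodule.finiteDimensional_map_mkQ_iff, Submodule.map_sup]
  infer_instance

omit [IsUniformAddGroup V] [CompleteSpace V] in
theorem ev_injective : Function.Injective (ev ℬ hopen hbasis) := by
  intro v w h
  have hmem : ∀ W ∈ ℬ, v - w ∈ W := fun W hW =>
    mem_of_forall_Vdual_apply_eq_zero ℬ hopen hbasis (hopen W hW) fun f _ => by
      rw [map_sub, sub_eq_zero]; exact LinearMap.congr_fun h f
  by_contra hne
  obtain ⟨W, hW, hWsub⟩ :=
    hbasis.mem_iff.mp (isOpen_compl_singleton.mem_nhds (sub_ne_zero.mpr hne).symm)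
  exact hWsub (hmem W hW) rfl

/-- for a Tate vector space `V` the evaluation map `V → V**` is
an isomorphism of topological vector spaces: it is a linear bijection onto the
continuous double dual, carrying each c-lattice of `V` onto the corresponding
double annihilator (a basic c-lattice of `V**`). -/
theorem tate_double_dual_iso
    (hcomm : ∀ W₁ ∈ ℬ, ∀ W₂ ∈ ℬ,
      FiniteDimensional k (↥W₁ ⧸ Submodule.comap W₁.subtype (W₁ ⊓ W₂))) :
    -- ev is linear:
    (∀ (v w : V), ev ℬ hopen hbasis (v + w) =
        ev ℬ hopen hbasis v + ev ℬ hopen hbasis w) ∧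
    (∀ (t : k) (v : V), ev ℬ hopen hbasis (t • v) = t • ev ℬ hopen hbasis v) ∧
    -- ev lands in the continuous double dual and is bijective onto it:
    (∀ v : V, ev ℬ hopen hbasis v ∈ Vddual ℬ hopen hbasis) ∧
    Function.Injective (ev (k := k) (V := V) ℬ hopen hbasis) ∧
    Set.range (ev (k := k) (V := V) ℬ hopen hbasis) = Vddual ℬ hopen hbasis ∧
    -- ev is a homeomorphism: it maps each c-lattice of V onto the
    -- corresponding basic open subspace (double annihilator) of V**:
    (∀ P : Submodule k V, IsCLattice k P →
      ev ℬ hopen hbasis '' (P : Set V) =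
        {F ∈ Vddual ℬ hopen hbasis |
          ∀ f : ↥(Vdual ℬ hopen hbasis),
            (∀ v ∈ P, (f : Module.Dual k V) v = 0) → F f = 0}) := by
  have ev_mem : ∀ v, ev ℬ hopen hbasis v ∈ Vddual ℬ hopen hbasis := fun v =>
    let ⟨P, hP, hv⟩ := exists_isCLattice_mem ℬ hopen hbasis hcomm v
    ⟨P, hP, fun f hf => hf v hv⟩
  refine ⟨fun v w => LinearMap.ext fun f => map_add (f : Module.Dual k V) v w,
    fun t v => LinearMap.ext fun f => map_smul (f : Module.Dual k V) t v, ev_mem,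
    ev_injective ℬ hopen hbasis,
    (Set.range_subset_iff.mpr ev_mem).antisymm ?_, fun P hP => ?_⟩
  · rintro F ⟨P, hP, hF⟩
    obtain ⟨v, -, hv⟩ := exists_mem_ev_eq_of_isCLattice ℬ hopen hbasis hP F hF
    exact ⟨v, hv⟩
  · ext F
    refine ⟨?_, fun ⟨_, hF⟩ => exists_mem_ev_eq_of_isCLattice ℬ hopen hbasis hP F hF⟩
    rintro ⟨v, hv, rfl⟩
    exact ⟨ev_mem v, fun f hf => hf v hv⟩

end
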